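/- Let M > 2 be an even squarefree integer such that −1 is a global norm from K = ℚ(√M), and suppose the fundamental unit satisfies N(ε_K) = −1. Then the prime ideal 𝔮₂ of 𝒪_K above 2 is not principal. -/

import Mathlib

/-!
Suppose `𝔮₂ = (α)`. Since `√M ∈ 𝔮₂` and `M ≡ 2 mod 4`, `α²` divides `4` and `M`, hence
`2 = α² u`. Taking norms, `u` is a unit of norm `1`; it is positive in `ℝ`, so `u = ε ^ n`,
and `N(ε) = -1` forces `n` to be even: `2` is a square in `K`. But in a quadratic extension an
element `x ∉ ℚ` with `x² = c ∈ ℚ` has norm `-c`; comparing the norms of `√2`, `√(M/2)` and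
their product shows that `M = 2 · (M/2)` would then be a rational square.
-/

open NumberField

/-- The real quadratic field `K = ℚ(√M)`, realized inside `ℝ`. -/
noncomputable def Ksqrt (M : ℕ) : IntermediateField ℚ ℝ :=
  IntermediateField.adjoin ℚ {Real.sqrt M}

/-- `ε` is the fundamental unit of `ℚ(√M)`: `ε > 1` and `ε` is minimal among units `> 1`. -/
def IsFundamentalUnit (M : ℕ) (ε : (𝓞 (Ksqrt M))ˣ) : Prop :=
  1 < (((ε : 𝓞 (Ksqrt M)) : Ksqrt M) : ℝ) ∧
    ∀ u : (𝓞 (Ksqrt M))ˣ, 1 < (((u : 𝓞 (Ksqrt M)) : Ksqrt M) : ℝ) →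
      (((ε : 𝓞 (Ksqrt M)) : Ksqrt M) : ℝ) ≤ (((u : 𝓞 (Ksqrt M)) : Ksqrt M) : ℝ)

/-- Given the family `Q` of ramified primes (`Q q` is the prime ideal above `q`),
this is the squarefree product ideal `𝔪_d = ∏_{q prime, q ∣ d} 𝔮_q`. -/
noncomputable def mIdeal (M : ℕ) (Q : ℕ → Ideal (𝓞 (Ksqrt M))) (d : ℕ) :
    Ideal (𝓞 (Ksqrt M)) :=
  ∏ q ∈ d.primeFactors, Q q

open Polynomial Module IntermediateField

theorem Squarefree.isUnit_of_isSquare {R : Type*} [Monoid R] {r : R} (hr : Squarefree r)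
    (hsq : IsSquare r) : IsUnit r := by
  obtain ⟨k, rfl⟩ := hsq
  have := hr k dvd_rfl
  exact this.mul this

theorem Squarefree.not_isSquare_natCast {n : ℕ} (hn : Squarefree n) (hn1 : n ≠ 1) :
    ¬IsSquare (n : ℚ) := by
  rw [Rat.isSquare_natCast_iff]
  exact fun h => hn1 (Nat.isUnit_iff.mp (hn.isUnit_of_isSquare h))

theorem minpoly_eq_X_sq_sub_C {F L : Type*} [Field F] [Field L] [Algebra F L] {x : L} {c : F}
    (hx : x ^ 2 = algebraMap F L c) (hc : ¬IsSquare c) : minpoly F x = X ^ 2 - C c := by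
  have hirr : Irreducible (X ^ 2 - C c) :=
    X_pow_sub_C_irreducible_of_prime Nat.prime_two fun b hb => hc ⟨b, by rw [← hb, sq]⟩
  refine (minpoly.eq_of_irreducible_of_monic hirr ?_ (monic_X_pow_sub_C c two_ne_zero)).symm
  simp [hx]

theorem norm_eq_neg_of_sq_eq {F L : Type*} [Field F] [Field L] [Algebra F L]
    (hL : finrank F L = 2) {x : L} {c : F} (hx : x ^ 2 = algebraMap F L c) (hc : ¬IsSquare c) :
    Algebra.norm F x = -c := by
  have : FiniteDimensional F L := Module.finite_of_finrank_eq_succ hL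
  have hint : IsIntegral F x := .of_finite F x
  have hmin := minpoly_eq_X_sq_sub_C hx hc
  have hdeg : finrank F F⟮x⟯ = 2 := by
    rw [adjoin.finrank hint, hmin, natDegree_X_pow_sub_C]
  have htop : finrank F⟮x⟯ L = 1 := by
    have := Module.finrank_mul_finrank F F⟮x⟯ L
    rw [hdeg, hL] at this
    omega
  rw [Algebra.norm_eq_norm_adjoin, htop, pow_one, ← adjoin.powerBasis_gen hint,
    Algebra.PowerBasis.norm_gen_eq_coeff_zero_minpoly, adjoin.powerBasis_dim,
    adjoin.powerBasis_gen, minpoly_gen, hmin]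
  simp

theorem isSquare_mul_of_finrank_eq_two {F L : Type*} [Field F] [Field L] [Algebra F L]
    [NeZero (2 : F)] (hL : finrank F L = 2) {x y : L} {a b : F}
    (hx : x ^ 2 = algebraMap F L a) (hy : y ^ 2 = algebraMap F L b)
    (ha : ¬IsSquare a) (hb : ¬IsSquare b) : IsSquare (a * b) := by
  by_contra hab
  have hxy : (x * y) ^ 2 = algebraMap F L (a * b) := by rw [mul_pow, hx, hy, map_mul]
  have key := norm_eq_neg_of_sq_eq hL hxy hab
  rw [map_mul, norm_eq_neg_of_sq_eq hL hx ha, norm_eq_neg_of_sq_eq hL hy hb] at key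
  have hab0 : a * b = 0 := by
    have h2 : (2 : F) * (a * b) = 0 := by linear_combination key
    exact (mul_eq_zero.mp h2).resolve_left two_ne_zero
  exact hab (hab0 ▸ IsSquare.zero)

theorem Ideal.IsPrime.sq_dvd_two_of_eq_span {R : Type*} [CommRing R] {Q : Ideal R}
    (hQ : Q.IsPrime) (h2 : (2 : R) ∈ Q) {α s k : R} (hα : Q = Ideal.span {α})
    (hs : s ^ 2 = 2 * (2 * k + 1)) : α ^ 2 ∣ 2 := by
  have hsQ : s ∈ Q := hQ.mem_of_pow_mem 2 (hs ▸ Q.mul_mem_right _ h2)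
  rw [hα, Ideal.mem_span_singleton] at h2 hsQ
  have h : (2 : R) = s ^ 2 - 2 ^ 2 * k := by rw [hs]; ring
  rw [h]
  exact dvd_sub (pow_dvd_pow_of_dvd hsQ 2) (dvd_mul_of_dvd_left (pow_dvd_pow_of_dvd h2 2) k)

theorem NumberField.isUnit_iff_isUnit_norm_int {K : Type*} [Field K] [NumberField K]
    {x : 𝓞 K} : IsUnit x ↔ IsUnit (Algebra.norm ℤ x) := by
  rw [isUnit_iff_norm, RingOfIntegers.coe_norm, ← Algebra.coe_norm_int, Int.isUnit_iff_abs_eq]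
  exact_mod_cast Iff.rfl

theorem NumberField.norm_int_eq_one_of_natCast_eq_sq_mul {K : Type*} [Field K] [NumberField K]
    (hK : finrank ℚ K = 2) {p : ℕ} (hp : p.Prime) {α γ : 𝓞 K} (hα : ¬IsUnit α)
    (h : (p : 𝓞 K) = α ^ 2 * γ) : Algebra.norm ℤ γ = 1 := by
  have hnorm : (p : ℤ) ^ 2 = Algebra.norm ℤ α ^ 2 * Algebra.norm ℤ γ := by
    have := congrArg (Algebra.norm ℤ) h
    rwa [map_mul, map_pow, ← map_natCast (algebraMap ℤ (𝓞 K)), Algebra.norm_algebraMap,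
      RingOfIntegers.rank, hK] at this
  have hdvd : (Algebra.norm ℤ α).natAbs ∣ p := by
    rw [← Int.natCast_dvd_natCast, Int.natAbs_dvd, ← Int.pow_dvd_pow_iff two_ne_zero]
    exact ⟨_, hnorm⟩
  have hαp : (Algebra.norm ℤ α).natAbs = p := by
    refine (hp.eq_one_or_self_of_dvd _ hdvd).resolve_left fun h1 => hα ?_
    rw [isUnit_iff_isUnit_norm_int, Int.isUnit_iff_natAbs_eq]
    exact h1
  rw [← Int.natAbs_sq (Algebra.norm ℤ α), hαp] at hnorm
  have hp0 : ((p : ℤ) ^ 2) ≠ 0 := pow_ne_zero 2 (by exact_mod_cast hp.ne_zero)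
  exact (mul_eq_left₀ hp0).mp hnorm.symm

theorem exists_zpow_eq_of_forall_one_lt_le {G : Type*} [Group G] (f : G →* ℝˣ)
    (hf : Function.Injective f) {e : G} (he : 1 < (f e : ℝ))
    (hmin : ∀ g, 1 < (f g : ℝ) → (f e : ℝ) ≤ f g) {g : G} (hg : 0 < (f g : ℝ)) :
    ∃ n : ℤ, g = e ^ n := by
  obtain ⟨n, hle, hlt⟩ := exists_mem_Ico_zpow hg he
  refine ⟨n, ?_⟩
  have hpos : 0 < (f e : ℝ) ^ n := zpow_pos (one_pos.trans he) n
  have hval : (f (e ^ (-n) * g) : ℝ) = (f g : ℝ) / (f e : ℝ) ^ n := by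
    rw [map_mul, map_zpow, Units.val_mul, Units.val_zpow_eq_zpow_val, zpow_neg, div_eq_inv_mul]
  have hone : (f (e ^ (-n) * g) : ℝ) = 1 := by
    refine le_antisymm (not_lt.mp fun h1 => (hmin _ h1).not_gt ?_) ?_
    · rw [hval, div_lt_iff₀ hpos, ← zpow_one_add₀ (one_pos.trans he).ne', add_comm]
      exact hlt
    · rwa [hval, one_le_div₀ hpos]
  have : e ^ (-n) * g = 1 := hf (Units.ext (by rw [hone, map_one, Units.val_one]))
  rw [zpow_neg, inv_mul_eq_one] at this
  exact this.symm

theorem isSquare_zpow_of_map_eq_one {G : Type*} [Group G] (χ : G →* ℤˣ) {e : G} (he : χ e = -1)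
    {n : ℤ} (hn : χ (e ^ n) = 1) : IsSquare (e ^ n) := by
  rcases Int.even_or_odd n with ⟨k, rfl⟩ | hodd
  · exact ⟨e ^ k, zpow_add e k k⟩
  · rw [map_zpow, he, hodd.neg_one_zpow] at hn
    exact absurd hn (by decide)

namespace Ksqrt

noncomputable def sqrt (M : ℕ) : Ksqrt M := AdjoinSimple.gen ℚ √(M : ℝ)

theorem sqrt_sq (M : ℕ) : sqrt M ^ 2 = M := by
  ext
  rw [IntermediateField.coe_pow, sqrt, AdjoinSimple.coe_gen]
  simp

theorem finrank_eq_two {M : ℕ} (hM : ¬IsSquare (M : ℚ)) : finrank ℚ (Ksqrt M) = 2 := by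
  have hx : √(M : ℝ) ^ 2 = algebraMap ℚ ℝ M := by simp
  have hint : IsIntegral ℚ √(M : ℝ) := .of_pow two_pos (hx ▸ isIntegral_algebraMap)
  rw [Ksqrt, adjoin.finrank hint, minpoly_eq_X_sq_sub_C hx hM, natDegree_X_pow_sub_C]

theorem exists_sq_eq_natCast (M : ℕ) : ∃ s : 𝓞 (Ksqrt M), s ^ 2 = M := by
  have hint : IsIntegral ℤ (sqrt M) :=
    .of_pow two_pos (by rw [sqrt_sq]; exact isIntegral_natCast M)
  exact ⟨⟨_, hint⟩, RingOfIntegers.ext (by push_cast; exact sqrt_sq M)⟩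

noncomputable def intToReal (M : ℕ) : 𝓞 (Ksqrt M) →+* ℝ :=
  (Ksqrt M).val.toRingHom.comp (algebraMap (𝓞 (Ksqrt M)) (Ksqrt M))

theorem exists_zpow_eq_of_pos {M : ℕ} {ε : (𝓞 (Ksqrt M))ˣ} (hε : IsFundamentalUnit M ε)
    {u : (𝓞 (Ksqrt M))ˣ} (hu : 0 < intToReal M u) : ∃ n : ℤ, u = ε ^ n :=
  exists_zpow_eq_of_forall_one_lt_le (Units.map (intToReal M).toMonoidHom)
    (Units.map_injective ((Ksqrt M).val.injective.comp RingOfIntegers.coe_injective)) hε.1 hε.2 hu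

theorem not_isSquare_two {M m : ℕ} (hMm : M = 2 * m) (hsf : Squarefree M) (hm : m ≠ 1) :
    ¬IsSquare (2 : Ksqrt M) := by
  subst hMm
  rintro ⟨t, ht⟩
  have hM := hsf.not_isSquare_natCast (by omega)
  have ht0 : t ≠ 0 := by rintro rfl; norm_num at ht
  have hy : (sqrt (2 * m) / t) ^ 2 = algebraMap ℚ (Ksqrt (2 * m)) m := by
    rw [div_pow, sqrt_sq, sq, ← ht]
    push_cast
    field_simp
  refine hM ?_
  push_cast
  refine isSquare_mul_of_finrank_eq_two (finrank_eq_two hM) (x := t) ?_ hy ?_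
    ((hsf.squarefree_of_dvd (dvd_mul_left m 2)).not_isSquare_natCast hm)
  · simpa [sq] using ht.symm
  · exact_mod_cast Nat.prime_two.squarefree.not_isSquare_natCast (by norm_num)

end Ksqrt

theorem stmt_12_general (M : ℕ) (hM : 2 < M) (hMeven : Even M) (hsf : Squarefree M)
    [NumberField (Ksqrt M)]
    (ε : (𝓞 (Ksqrt M))ˣ) (hε : IsFundamentalUnit M ε)
    (hnorm : Algebra.norm ℚ ((ε : 𝓞 (Ksqrt M)) : Ksqrt M) = -1)
    (Q2 : Ideal (𝓞 (Ksqrt M))) (hQ2 : Q2.IsPrime ∧ (2 : 𝓞 (Ksqrt M)) ∈ Q2) :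
    ¬ Q2.IsPrincipal := by
  rintro ⟨α, hα⟩
  obtain ⟨m, hMm⟩ := hMeven.two_dvd
  obtain ⟨k, rfl⟩ : Odd m := Nat.odd_iff.mpr (by
    have : ¬ 2 * 2 ∣ M := fun h => absurd (hsf 2 h) (by decide)
    omega)
  obtain ⟨s, hs⟩ := Ksqrt.exists_sq_eq_natCast M
  obtain ⟨γ, hγ⟩ := hQ2.1.sq_dvd_two_of_eq_span hQ2.2 hα (k := k)
    (by rw [hs, hMm]; push_cast; ring)
  have hαu : ¬IsUnit α := fun hu =>
    hQ2.1.ne_top (by rw [hα, Ideal.span_singleton_eq_top]; exact hu)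
  have hK := Ksqrt.finrank_eq_two (hsf.not_isSquare_natCast (by omega))
  have hγN := norm_int_eq_one_of_natCast_eq_sq_mul hK Nat.prime_two hαu (by exact_mod_cast hγ)
  obtain ⟨u, rfl⟩ := isUnit_iff_isUnit_norm_int.mpr (hγN ▸ isUnit_one)
  have hu : 0 < Ksqrt.intToReal M u := by
    have h := congrArg (Ksqrt.intToReal M) hγ
    rw [map_ofNat, map_mul, map_pow] at h
    exact pos_of_mul_pos_right (h ▸ two_pos) (sq_nonneg _)
  obtain ⟨n, rfl⟩ := Ksqrt.exists_zpow_eq_of_pos hε hu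
  have hεN : Algebra.norm ℤ (ε : 𝓞 (Ksqrt M)) = -1 := by
    exact_mod_cast (Algebra.coe_norm_int _).trans hnorm
  obtain ⟨δ, hδ⟩ := isSquare_zpow_of_map_eq_one (Units.map (Algebra.norm ℤ))
    (Units.ext (by simpa using hεN)) (Units.ext hγN)
  have h2 : IsSquare (2 : 𝓞 (Ksqrt M)) := ⟨α * δ, by rw [hγ, hδ]; push_cast; ring⟩
  exact Ksqrt.not_isSquare_two hMm hsf (by omega)
    (map_ofNat (algebraMap (𝓞 (Ksqrt M)) (Ksqrt M)) 2 ▸ h2.map _)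

/-- For `M > 2` even squarefree with `-1` a global norm from `K = ℚ(√M)` and
`N(ε_K) = -1`, the prime ideal `𝔮₂` of `𝒪_K` above `2` is not principal. -/
theorem stmt_12 (M : ℕ) (hM : 2 < M) (hMeven : Even M) (hsf : Squarefree M)
    [NumberField (Ksqrt M)]
    (hglob : ∃ x : Ksqrt M, Algebra.norm ℚ x = -1)
    (ε : (𝓞 (Ksqrt M))ˣ) (hε : IsFundamentalUnit M ε)
    (hnorm : Algebra.norm ℚ ((ε : 𝓞 (Ksqrt M)) : Ksqrt M) = -1)
    (Q2 : Ideal (𝓞 (Ksqrt M))) (hQ2 : Q2.IsPrime ∧ (2 : 𝓞 (Ksqrt M)) ∈ Q2) :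
    ¬ Q2.IsPrincipal :=
  stmt_12_general M hM hMeven hsf ε hε hnorm Q2 hQ2
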